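/- For every integer K ≥ 1 and every H ∈ ℕ, the value function s ↦ V H s is continuous on Fin K → ℝ. -/

import Mathlib

open scoped BigOperators

noncomputable section

def simplex (K : ℕ) : Set (Fin K → ℝ) :=
  {q | (∀ k, 0 ≤ q k) ∧ ∑ k, q k = 1}

def simplexInt (K : ℕ) : Set (Fin K → ℝ) :=
  {r | (∀ k, 0 < r k) ∧ ∑ k, r k = 1}

noncomputable def V (K : ℕ) : ℕ → (Fin K → ℝ) → ℝ
  | 0, s => ⨆ k, s k
  | H + 1, s =>
      sInf ((fun r : Fin K → ℝ =>
        sSup ((fun q : Fin K → ℝ => V K H (fun k => s k + q k / r k)) '' simplex K))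
        '' simplexInt K)

/-! The induction hypothesis is that `V K H` is monotone and 1-Lipschitz for the sup metric. Both
properties pass through the recursion: each map `s ↦ V K H (s + q / r)` inherits them, since
translations are isometries, and they survive pointwise suprema and infima of families bounded
at every point. Monotonicity provides those bounds: the supremum over `q` is dominated by the
value at the vector with all coordinates `1 / r k`, and every candidate in the infimum over `r`
is at least `V K H s`. -/

open Set

section PointwiseSupInf

variable {α ι : Type*}

theorem LipschitzWith.ciSup [PseudoMetricSpace α] [Nonempty ι] {L : NNReal} {f : ι → α → ℝ}
    (hf : ∀ i, LipschitzWith L (f i)) (hbdd : ∀ x, BddAbove (range fun i => f i x)) :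
    LipschitzWith L fun x => ⨆ i, f i x :=
  LipschitzWith.of_le_add_mul L fun x y => ciSup_le fun i =>
    ((hf i).le_add_mul x y).trans (by gcongr; exact le_ciSup (hbdd y) i)

theorem LipschitzWith.ciInf [PseudoMetricSpace α] [Nonempty ι] {L : NNReal} {f : ι → α → ℝ}
    (hf : ∀ i, LipschitzWith L (f i)) (hbdd : ∀ x, BddBelow (range fun i => f i x)) :
    LipschitzWith L fun x => ⨅ i, f i x :=
  LipschitzWith.of_le_add_mul L fun x y => by
    rw [← sub_le_iff_le_add]
    exact le_ciInf fun i => sub_le_iff_le_add.mpr <|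
      (ciInf_le (hbdd x) i).trans ((hf i).le_add_mul x y)

theorem Monotone.ciSup [Preorder α] {f : ι → α → ℝ} (hf : ∀ i, Monotone (f i))
    (hbdd : ∀ x, BddAbove (range fun i => f i x)) : Monotone fun x => ⨆ i, f i x :=
  fun _ y hxy => ciSup_mono (hbdd y) fun i => hf i hxy

theorem Monotone.ciInf [Preorder α] {f : ι → α → ℝ} (hf : ∀ i, Monotone (f i))
    (hbdd : ∀ x, BddBelow (range fun i => f i x)) : Monotone fun x => ⨅ i, f i x :=
  fun x _ hxy => ciInf_mono (hbdd x) fun i => hf i hxy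

end PointwiseSupInf

theorem uniform_mem_simplexInt {K : ℕ} (hK : 1 ≤ K) :
    (fun _ : Fin K => (K : ℝ)⁻¹) ∈ simplexInt K := by
  have hKpos : (0 : ℝ) < K := by exact_mod_cast hK
  refine ⟨fun _ => inv_pos.mpr hKpos, ?_⟩
  simp [hKpos.ne']

theorem le_one_of_mem_simplex {K : ℕ} {q : Fin K → ℝ} (hq : q ∈ simplex K) (k : Fin K) :
    q k ≤ 1 :=
  hq.2 ▸ Finset.single_le_sum (fun j _ => hq.1 j) (Finset.mem_univ k)

theorem simplexInt_subset_simplex (K : ℕ) : simplexInt K ⊆ simplex K :=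
  fun _ hr => ⟨fun k => (hr.1 k).le, hr.2⟩

theorem V_zero (K : ℕ) : V K 0 = fun s => ⨆ k, s k := rfl

theorem V_succ (K H : ℕ) :
    V K (H + 1) = fun s => ⨅ r : simplexInt K, ⨆ q : simplex K,
      V K H (s + fun k => q.1 k / r.1 k) := by
  ext s
  simp only [V, sSup_image', sInf_image']
  rfl

theorem lipschitzWith_one_V_and_monotone {K : ℕ} (hK : 1 ≤ K) (H : ℕ) :
    LipschitzWith 1 (V K H) ∧ Monotone (V K H) := by
  have : Nonempty (Fin K) := Fin.pos_iff_nonempty.mp hK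
  have : Nonempty (simplexInt K) := ⟨⟨_, uniform_mem_simplexInt hK⟩⟩
  have : Nonempty (simplex K) := ⟨⟨_, simplexInt_subset_simplex K (uniform_mem_simplexInt hK)⟩⟩
  have hbdd_fin (s : Fin K → ℝ) : BddAbove (range s) := (finite_range s).bddAbove
  induction H with
  | zero =>
    rw [V_zero]
    exact ⟨.ciSup (fun k => LipschitzWith.eval k) hbdd_fin,
      .ciSup (fun k => Function.monotone_eval k) hbdd_fin⟩
  | succ H ih =>
    obtain ⟨hlip, hmono⟩ := ih
    have hshift_lip (w : Fin K → ℝ) : LipschitzWith 1 fun s => V K H (s + w) :=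
      one_mul (1 : NNReal) ▸ hlip.comp (isometry_add_right w).lipschitz
    have hshift_mono (w : Fin K → ℝ) : Monotone fun s => V K H (s + w) :=
      fun _ _ h => hmono (add_le_add_left h w)
    have hinner_bdd (r : simplexInt K) (s : Fin K → ℝ) :
        BddAbove (range fun q : simplex K => V K H (s + fun k => q.1 k / r.1 k)) := by
      refine ⟨V K H (s + fun k => 1 / r.1 k), ?_⟩
      rintro _ ⟨q, rfl⟩
      exact hmono <| add_le_add_right (fun k =>
        div_le_div_of_nonneg_right (le_one_of_mem_simplex q.2 k) (r.2.1 k).le) s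
    have houter_bdd (s : Fin K → ℝ) : BddBelow (range fun r : simplexInt K =>
        ⨆ q : simplex K, V K H (s + fun k => q.1 k / r.1 k)) := by
      refine ⟨V K H s, ?_⟩
      rintro _ ⟨r, rfl⟩
      obtain ⟨q⟩ := ‹Nonempty (simplex K)›
      exact (hmono (le_add_of_nonneg_right fun k => div_nonneg (q.2.1 k) (r.2.1 k).le)).trans
        (le_ciSup (hinner_bdd r s) q)
    rw [V_succ]
    exact ⟨.ciInf (fun r => .ciSup (fun _ => hshift_lip _) (hinner_bdd r)) houter_bdd,
      .ciInf (fun r => .ciSup (fun _ => hshift_mono _) (hinner_bdd r)) houter_bdd⟩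

/-- The value function is continuous on the whole state space. -/
theorem value_continuous (K : ℕ) (hK : 1 ≤ K) (H : ℕ) :
    Continuous (V K H) :=
  (lipschitzWith_one_V_and_monotone hK H).1.continuous
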